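/- arXiv:2012.06891 — 2 statements merged into one kernel-verified Lean document; each statement's English description precedes it below -/
import Mathlib

section
/- For integers 1 ≤ i < k and n ≥ k + 1, the number of restricted growth sequences of length n with maximal letter k having exactly i fixed points is |{π ∈ R_{n,k} : F_π = i}| = i · Σ Π_{j=i}^{k} j^{m_j}, where the sum runs over all tuples (m_i, m_{i+1}, …, m_k) of nonnegative integers with m_i + m_{i+1} + ⋯ + m_k = n − k − 1. -/
/-!
Write `a(n, k, i)` for the number of sequences in `R_{n,k}` with `i` fixed points. For `k ≤ n`
the last letter of a sequence in `R_{n+1,k}` is at most `k < n + 1`, so it is never a fixed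
point, and deleting it gives `a(n + 1, k, i) = k · a(n, k, i) + a(n, k - 1, i)` (the prefix
already reaches `k`, or it reaches `k - 1` and the last letter is `k`). The complete homogeneous
sums satisfy the same recursion `h_{N+1}(i, …, k) = k · h_N(i, …, k) + h_{N+1}(i, …, k - 1)`.
The boundary values agree too: a sequence has at most as many fixed points as its maximal letter,
so `a(n, i - 1, i) = 0`, and `12⋯n` is the only sequence in `R_{n,n}`, which gives
`a(k + 1, k, i) = i`.
-/

open Finset
open scoped Classical

/-- `π : Fin n → ℕ` is a restricted growth sequence (entries are positive, the first entry
is `1`, and each entry exceeds the maximum of the previous entries by at most `1`;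
equivalently `π₁ = 1` and `π_{j+1} ≤ 1 + max {π₁, …, π_j}`). -/
def IsRGS {n : ℕ} (π : Fin n → ℕ) : Prop :=
  ∀ i : Fin n, 1 ≤ π i ∧ π i ≤ (Finset.univ.filter (fun j : Fin n => j < i)).sup π + 1

/-- The (finite) set `R_n` of restricted growth sequences of length `n`
(all such sequences take values in `{1, …, n}`). -/
noncomputable def RGS (n : ℕ) : Finset (Fin n → ℕ) :=
  (Fintype.piFinset fun _ : Fin n => Finset.Icc 1 n).filter IsRGS

/-- The (finite) set `R_{n,k}` of restricted growth sequences of length `n`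
with maximal letter `k`. -/
noncomputable def RGSk (n k : ℕ) : Finset (Fin n → ℕ) :=
  (RGS n).filter (fun π => Finset.univ.sup π = k)

/-- `F_π`: the number of fixed points of `π`, i.e. (1-indexed) positions `i` with `π_i = i`. -/
def fixCount {n : ℕ} (π : Fin n → ℕ) : ℕ :=
  (Finset.univ.filter (fun i : Fin n => π i = (i : ℕ) + 1)).card

section CompleteHomogeneous

variable {R : Type*} [CommSemiring R]

def completeHomogeneous {s : ℕ} (x : Fin s → R) (N : ℕ) : R :=
  ∑ m ∈ Finset.Nat.antidiagonalTuple s N, ∏ t, x t ^ m t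

lemma completeHomogeneous_zero {s : ℕ} (x : Fin s → R) : completeHomogeneous x 0 = 1 := by
  simp [completeHomogeneous, Finset.Nat.antidiagonalTuple_zero_right]

lemma completeHomogeneous_fin_zero_succ (x : Fin 0 → R) (N : ℕ) :
    completeHomogeneous x (N + 1) = 0 := by
  simp [completeHomogeneous]

lemma completeHomogeneous_eq_sum_antidiagonal {s : ℕ} (x : Fin (s + 1) → R) (N : ℕ) :
    completeHomogeneous x N = ∑ p ∈ antidiagonal N,
      completeHomogeneous (Fin.init x) p.1 * x (Fin.last s) ^ p.2 := by
  simp only [completeHomogeneous, sum_mul]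
  rw [sum_sigma']
  refine sum_nbij' (fun m => ⟨(∑ t, Fin.init m t, m (Fin.last s)), Fin.init m⟩)
    (fun q => Fin.snoc q.2 q.1.2) ?_ ?_ ?_ ?_ ?_
  · intro m hm
    simp_all [Finset.Nat.mem_antidiagonalTuple, Fin.sum_univ_castSucc, Fin.init]
  · rintro ⟨⟨a, b⟩, m⟩ hm
    simp_all [Finset.Nat.mem_antidiagonalTuple, Fin.sum_univ_castSucc]
  · intro m _
    simp
  · rintro ⟨⟨a, b⟩, m⟩ hm
    simp_all [Finset.Nat.mem_antidiagonalTuple]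
  · intro m _
    simp [Fin.prod_univ_castSucc, Fin.init]

lemma completeHomogeneous_succ {s : ℕ} (x : Fin (s + 1) → R) (N : ℕ) :
    completeHomogeneous x (N + 1)
      = x (Fin.last s) * completeHomogeneous x N + completeHomogeneous (Fin.init x) (N + 1) := by
  rw [completeHomogeneous_eq_sum_antidiagonal, Nat.sum_antidiagonal_succ',
    completeHomogeneous_eq_sum_antidiagonal, mul_sum]
  simp only [pow_zero, mul_one]
  rw [add_comm]
  congr 1
  exact sum_congr rfl fun p _ => by ring

end CompleteHomogeneous

lemma sup_univ_snoc {n : ℕ} (σ : Fin n → ℕ) (c : ℕ) :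
    univ.sup (Fin.snoc σ c : Fin (n + 1) → ℕ) = max (univ.sup σ) c := by
  rw [Fin.univ_castSuccEmb, sup_cons, sup_map, max_comm]
  simp [Function.comp_def]

lemma sup_filter_lt_snoc_castSucc {n : ℕ} (σ : Fin n → ℕ) (c : ℕ) (j : Fin n) :
    (univ.filter (· < j.castSucc)).sup (Fin.snoc σ c : Fin (n + 1) → ℕ)
      = (univ.filter (· < j)).sup σ := by
  rw [filter_gt_eq_Iio, filter_gt_eq_Iio, Fin.Iio_castSucc, sup_map]
  simp [Function.comp_def]

lemma sup_filter_lt_snoc_last {n : ℕ} (σ : Fin n → ℕ) (c : ℕ) :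
    (univ.filter (· < Fin.last n)).sup (Fin.snoc σ c : Fin (n + 1) → ℕ) = univ.sup σ := by
  rw [filter_gt_eq_Iio, Fin.Iio_last_eq_map, sup_map]
  simp [Function.comp_def]

lemma isRGS_snoc_iff {n : ℕ} (σ : Fin n → ℕ) (c : ℕ) :
    IsRGS (Fin.snoc σ c : Fin (n + 1) → ℕ) ↔ IsRGS σ ∧ 1 ≤ c ∧ c ≤ univ.sup σ + 1 := by
  simp only [IsRGS, Fin.forall_fin_succ', Fin.snoc_castSucc, Fin.snoc_last,
    sup_filter_lt_snoc_castSucc, sup_filter_lt_snoc_last]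

lemma fixCount_snoc {n : ℕ} (σ : Fin n → ℕ) (c : ℕ) :
    fixCount (Fin.snoc σ c : Fin (n + 1) → ℕ) = fixCount σ + if c = n + 1 then 1 else 0 := by
  simp only [fixCount, card_filter, Fin.sum_univ_castSucc, Fin.snoc_castSucc, Fin.snoc_last,
    Fin.val_castSucc, Fin.val_last]

lemma IsRGS.sup_le {n : ℕ} {π : Fin n → ℕ} (h : IsRGS π) : univ.sup π ≤ n := by
  induction π using Fin.snocInduction with
  | elim0 => simp
  | snoc σ c ih =>
    rw [isRGS_snoc_iff] at h
    rw [sup_univ_snoc]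
    have := ih h.1
    omega

lemma mem_RGSk {n k : ℕ} {π : Fin n → ℕ} : π ∈ RGSk n k ↔ IsRGS π ∧ univ.sup π = k := by
  simp only [RGSk, RGS, mem_filter, Fintype.mem_piFinset, mem_Icc]
  exact ⟨fun h => ⟨h.1.2, h.2⟩,
    fun h => ⟨⟨fun j => ⟨(h.1 j).1, (le_sup (mem_univ j)).trans h.1.sup_le⟩, h.1⟩, h.2⟩⟩

lemma fixCount_le_sup {n : ℕ} (π : Fin n → ℕ) : fixCount π ≤ univ.sup π := by
  have hfix_lt :
      ∀ j ∈ univ.filter (fun j : Fin n => π j = j + 1), (j : ℕ) ∈ range (univ.sup π) := by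
    intro j hj
    have := le_sup (f := π) (mem_univ j)
    rw [mem_filter] at hj
    rw [mem_range]
    omega
  exact (card_le_card_of_injOn Fin.val hfix_lt Fin.val_injective.injOn).trans_eq (card_range _)

lemma snoc_id (n : ℕ) :
    (Fin.snoc (fun j : Fin n => (j : ℕ) + 1) (n + 1) : Fin (n + 1) → ℕ) =
      fun j : Fin (n + 1) => (j : ℕ) + 1 := by
  funext j
  induction j using Fin.lastCases <;> simp

lemma sup_id (n : ℕ) : univ.sup (fun j : Fin n => (j : ℕ) + 1) = n := by
  induction n with
  | zero => simp
  | succ n ih => rw [← snoc_id, sup_univ_snoc, ih, max_eq_right n.le_succ]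

lemma isRGS_id (n : ℕ) : IsRGS (fun j : Fin n => (j : ℕ) + 1) := by
  induction n with
  | zero => exact fun j => j.elim0
  | succ n ih =>
    rw [← snoc_id, isRGS_snoc_iff, sup_id]
    exact ⟨ih, n.succ_pos, le_rfl⟩

lemma fixCount_id (n : ℕ) : fixCount (fun j : Fin n => (j : ℕ) + 1) = n := by
  simp [fixCount]

lemma IsRGS.eq_id_of_sup_eq {n : ℕ} {π : Fin n → ℕ} (h : IsRGS π) (hsup : univ.sup π = n) :
    π = fun j : Fin n => (j : ℕ) + 1 := by
  induction π using Fin.snocInduction with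
  | elim0 => exact Subsingleton.elim _ _
  | @snoc m σ c ih =>
    rw [isRGS_snoc_iff] at h
    rw [sup_univ_snoc] at hsup
    have := h.1.sup_le
    rw [ih h.1 (by omega), show c = m + 1 by omega, snoc_id]

lemma RGSk_self (n : ℕ) : RGSk n n = {fun j : Fin n => (j : ℕ) + 1} := by
  ext π
  rw [mem_RGSk, mem_singleton]
  exact ⟨fun h => h.1.eq_id_of_sup_eq h.2, by rintro rfl; exact ⟨isRGS_id n, sup_id n⟩⟩

lemma snoc_mem_filter_RGSk_iff {n k i c : ℕ} (σ : Fin n → ℕ) (hk : 1 ≤ k) (hkn : k ≤ n) :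
    (Fin.snoc σ c : Fin (n + 1) → ℕ) ∈ (RGSk (n + 1) k).filter (fixCount · = i) ↔
      c ∈ Icc 1 k ∧ σ ∈ (RGSk n k).filter (fixCount · = i) ∨
        c ∈ ({k} : Finset ℕ) ∧ σ ∈ (RGSk n (k - 1)).filter (fixCount · = i) := by
  simp only [mem_filter, mem_RGSk, isRGS_snoc_iff, sup_univ_snoc, fixCount_snoc, mem_Icc,
    mem_singleton]
  by_cases hσ : IsRGS σ <;> simp only [hσ, true_and, false_and, and_false, or_false]
  split_ifs <;> omega

noncomputable def rgsCount (n k i : ℕ) : ℕ := ((RGSk n k).filter (fun π => fixCount π = i)).card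

lemma rgsCount_succ {n k : ℕ} (i : ℕ) (hk : 1 ≤ k) (hkn : k ≤ n) :
    rgsCount (n + 1) k i = k * rgsCount n k i + rgsCount n (k - 1) i := by
  have hdisj : Disjoint (RGSk n k) (RGSk n (k - 1)) :=
    disjoint_left.2 fun π h h' => by rw [mem_RGSk] at h h'; omega
  have hsplit : (RGSk (n + 1) k).filter (fixCount · = i) =
      (Icc 1 k ×ˢ (RGSk n k).filter (fixCount · = i) ∪
        {k} ×ˢ (RGSk n (k - 1)).filter (fixCount · = i)).map
          (Fin.snocEquiv fun _ => ℕ).toEmbedding := by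
    ext π
    obtain ⟨⟨c, σ⟩, rfl⟩ := (Fin.snocEquiv fun _ => ℕ).surjective π
    rw [mem_map_equiv, Equiv.symm_apply_apply, mem_union, mem_product, mem_product]
    exact snoc_mem_filter_RGSk_iff σ hk hkn
  rw [rgsCount, hsplit, card_map, card_union_of_disjoint
    (disjoint_product.2 (Or.inr (disjoint_filter_filter hdisj))), card_product, card_product,
    Nat.card_Icc, card_singleton, Nat.add_sub_cancel, one_mul]
  rfl

lemma rgsCount_eq_zero_of_lt {n k i : ℕ} (h : k < i) : rgsCount n k i = 0 := by
  rw [rgsCount, card_eq_zero, filter_eq_empty_iff]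
  intro π hπ
  have := fixCount_le_sup π
  rw [mem_RGSk] at hπ
  omega

lemma rgsCount_self (n i : ℕ) : rgsCount n n i = if n = i then 1 else 0 := by
  rw [rgsCount, RGSk_self, filter_singleton, fixCount_id]
  split_ifs <;> rfl

lemma rgsCount_length_succ {k i : ℕ} (hi : 1 ≤ i) (hik : i ≤ k) : rgsCount (k + 1) k i = i := by
  induction k with
  | zero => omega
  | succ k ih =>
    rw [rgsCount_succ i (by omega) le_rfl, rgsCount_self, Nat.add_sub_cancel]
    rcases hik.eq_or_lt with rfl | hik
    · rw [if_pos rfl, rgsCount_eq_zero_of_lt k.lt_succ_self, mul_one, add_zero]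
    · rw [if_neg hik.ne', mul_zero, zero_add, ih (by omega)]

lemma rgsCount_eq_mul_completeHomogeneous {i : ℕ} (hi : 1 ≤ i) (n s : ℕ) (hn : i + s < n) :
    rgsCount n (i + s) i
      = i * completeHomogeneous (fun t : Fin (s + 1) => i + (t : ℕ)) (n - (i + s) - 1) := by
  induction n generalizing s with
  | zero => omega
  | succ n ih =>
    rcases (show i + s = n ∨ i + s < n by omega) with rfl | hn
    · rw [rgsCount_length_succ hi (by omega), show i + s + 1 - (i + s) - 1 = 0 by omega,
        completeHomogeneous_zero, mul_one]
    · obtain ⟨d, rfl⟩ : ∃ d, n = i + s + 1 + d := ⟨n - (i + s + 1), by omega⟩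
      have hlower : rgsCount (i + s + 1 + d) (i + s - 1) i
          = i * completeHomogeneous (fun t : Fin s => i + (t : ℕ)) (d + 1) := by
        rcases s with _ | s
        · rw [rgsCount_eq_zero_of_lt (by omega), completeHomogeneous_fin_zero_succ, mul_zero]
        · rw [show i + (s + 1) - 1 = i + s by omega, ih s (by omega)]
          congr 2
          omega
      rw [rgsCount_succ i (by omega) (by omega), ih s hn, hlower,
        show i + s + 1 + d + 1 - (i + s) - 1 = d + 1 by omega,
        show i + s + 1 + d - (i + s) - 1 = d by omega, completeHomogeneous_succ, Fin.val_last]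
      have hinit : Fin.init (fun t : Fin (s + 1) => i + (t : ℕ)) = fun t : Fin s => i + (t : ℕ) :=
        rfl
      rw [hinit]
      ring

/-- For `1 ≤ i < k` and `n ≥ k + 1`, the number of RGS of length `n` with
maximal letter `k` and exactly `i` fixed points equals
`i · Σ Π_{j=i}^{k} j^{m_j}`, summed over tuples `(m_i, …, m_k)` of nonnegative integers with
`m_i + ⋯ + m_k = n - k - 1`. -/
theorem rgs_count_i_fixed_points (i k n : ℕ) (hi : 1 ≤ i) (hik : i < k) (hn : k + 1 ≤ n) :
    ((RGSk n k).filter (fun π => fixCount π = i)).card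
      = i * ∑ m ∈ Finset.Nat.antidiagonalTuple (k - i + 1) (n - k - 1),
          ∏ t : Fin (k - i + 1), (i + (t : ℕ)) ^ (m t) := by
  obtain ⟨s, rfl⟩ : ∃ s, k = i + s := ⟨k - i, by omega⟩
  rw [Nat.add_sub_cancel_left]
  exact rgsCount_eq_mul_completeHomogeneous hi n s (by omega)
end

section
/- For all natural numbers n and t, Σ_{k=0}^{∞} (k+t)ⁿ / k! = e · Σ_{ℓ=0}^{n} C(n,ℓ) · t^{n−ℓ} · B_ℓ, where the series on the left converges (as a series of nonnegative reals), C(n,ℓ) is the binomial coefficient, and B_ℓ := |R_ℓ| is the ℓ-th Bell number (with B_0 = 1). In particular (the case t = 0), Dobinski's formula B_n = (1/e) Σ_{m=0}^{∞} mⁿ/m! holds. -/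
open Finset
open scoped Classical

lemma isRGS_le {n : ℕ} {π : Fin n → ℕ} (h : IsRGS π) : ∀ i : Fin n, π i ≤ (i : ℕ) + 1 := by
  have key : ∀ m : ℕ, ∀ i : Fin n, (i : ℕ) < m → π i ≤ (i : ℕ) + 1 := by
    intro m
    induction m with
    | zero => intro i hi; omega
    | succ m ih =>
      intro i hi
      refine le_trans (h i).2 ?_
      have hs : (Finset.univ.filter (fun j : Fin n => j < i)).sup π ≤ (i : ℕ) := by
        apply Finset.sup_le
        intro j hj
        simp only [mem_filter, mem_univ, true_and] at hj
        have hj' : (j : ℕ) < (i : ℕ) := hj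
        have := ih j (by omega)
        omega
      omega
  exact fun i => key ((i : ℕ) + 1) i (by omega)

lemma mem_RGS_iff {n : ℕ} {π : Fin n → ℕ} : π ∈ RGS n ↔ IsRGS π := by
  unfold RGS
  simp only [mem_filter, Fintype.mem_piFinset, Finset.mem_Icc]
  constructor
  · exact fun h => h.2
  · intro h
    refine ⟨fun i => ⟨(h i).1, ?_⟩, h⟩
    have := isRGS_le h i
    have := i.isLt
    omega

lemma sup_le_of_isRGS {n : ℕ} {π : Fin n → ℕ} (h : IsRGS π) : Finset.univ.sup π ≤ n := by
  apply Finset.sup_le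
  intro i _
  have := isRGS_le h i
  have := i.isLt
  omega

lemma sup_snoc_lt_castSucc {n : ℕ} (σ : Fin n → ℕ) (v : ℕ) (i : Fin n) :
    (Finset.univ.filter (fun j : Fin (n+1) => j < i.castSucc)).sup (Fin.snoc σ v) =
    (Finset.univ.filter (fun j : Fin n => j < i)).sup σ := by
  apply le_antisymm
  · apply Finset.sup_le
    intro j hj
    simp only [mem_filter, mem_univ, true_and] at hj
    have hjv : (j : ℕ) < (i : ℕ) := hj
    have hlt : (j : ℕ) < n := lt_of_lt_of_le hjv (by omega)
    have hj2 : j = Fin.castSucc ⟨(j : ℕ), hlt⟩ := by ext; simp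
    have hmem : (⟨(j : ℕ), hlt⟩ : Fin n) ∈ Finset.univ.filter (fun j' : Fin n => j' < i) :=
      Finset.mem_filter.mpr ⟨Finset.mem_univ _, by rw [Fin.lt_def]; exact hjv⟩
    rw [hj2, Fin.snoc_castSucc]
    exact Finset.le_sup hmem
  · apply Finset.sup_le
    intro j hj
    simp only [mem_filter, mem_univ, true_and] at hj
    have hmem : j.castSucc ∈ Finset.univ.filter (fun j' : Fin (n+1) => j' < i.castSucc) :=
      Finset.mem_filter.mpr ⟨Finset.mem_univ _, Fin.castSucc_lt_castSucc_iff.mpr hj⟩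
    have := Finset.le_sup (f := Fin.snoc σ v) hmem
    rwa [Fin.snoc_castSucc] at this

lemma sup_snoc_lt_last {n : ℕ} (σ : Fin n → ℕ) (v : ℕ) :
    (Finset.univ.filter (fun j : Fin (n+1) => j < Fin.last n)).sup (Fin.snoc σ v) =
    Finset.univ.sup σ := by
  apply le_antisymm
  · apply Finset.sup_le
    intro j hj
    simp only [mem_filter, mem_univ, true_and] at hj
    have hlt : (j : ℕ) < n := hj
    have hj2 : j = Fin.castSucc ⟨(j : ℕ), hlt⟩ := by ext; simp
    rw [hj2, Fin.snoc_castSucc]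
    exact Finset.le_sup (mem_univ _)
  · apply Finset.sup_le
    intro j _
    have hmem : j.castSucc ∈ Finset.univ.filter (fun j' : Fin (n+1) => j' < Fin.last n) :=
      Finset.mem_filter.mpr ⟨Finset.mem_univ _, Fin.castSucc_lt_last j⟩
    have := Finset.le_sup (f := Fin.snoc σ v) hmem
    rwa [Fin.snoc_castSucc] at this

lemma sup_snoc {n : ℕ} (σ : Fin n → ℕ) (v : ℕ) :
    Finset.univ.sup (Fin.snoc σ v) = max (Finset.univ.sup σ) v := by
  apply le_antisymm
  · apply Finset.sup_le
    intro j _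
    induction j using Fin.lastCases with
    | last => simp
    | cast j => rw [Fin.snoc_castSucc]; exact le_max_of_le_left (Finset.le_sup (mem_univ _))
  · apply max_le
    · apply Finset.sup_le
      intro j _
      have := Finset.le_sup (f := Fin.snoc σ v) (mem_univ j.castSucc)
      rwa [Fin.snoc_castSucc] at this
    · have := Finset.le_sup (f := Fin.snoc σ v) (mem_univ (Fin.last n))
      rwa [Fin.snoc_last] at this

lemma isRGS_snoc {n : ℕ} {σ : Fin n → ℕ} {v : ℕ} :
    IsRGS (Fin.snoc σ v) ↔ IsRGS σ ∧ 1 ≤ v ∧ v ≤ Finset.univ.sup σ + 1 := by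
  constructor
  · intro h
    refine ⟨fun i => ?_, ?_, ?_⟩
    · have := h i.castSucc
      rwa [Fin.snoc_castSucc, sup_snoc_lt_castSucc] at this
    · have := (h (Fin.last n)).1
      rwa [Fin.snoc_last] at this
    · have := (h (Fin.last n)).2
      rwa [Fin.snoc_last, sup_snoc_lt_last] at this
  · rintro ⟨hσ, hv1, hv2⟩ i
    induction i using Fin.lastCases with
    | last => rw [Fin.snoc_last, sup_snoc_lt_last]; exact ⟨hv1, hv2⟩
    | cast i => rw [Fin.snoc_castSucc, sup_snoc_lt_castSucc]; exact hσ i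

lemma mem_RGSk_iff {n k : ℕ} {π : Fin n → ℕ} :
    π ∈ RGSk n k ↔ IsRGS π ∧ Finset.univ.sup π = k := by
  rw [RGSk, Finset.mem_filter, mem_RGS_iff]

lemma card_RGS_zero : (RGS 0).card = 1 := by
  rw [Finset.card_eq_one]
  refine ⟨fun i => i.elim0, ?_⟩
  ext π
  simp only [Finset.mem_singleton]
  constructor
  · intro _; funext i; exact i.elim0
  · rintro rfl; exact mem_RGS_iff.mpr (fun i => i.elim0)

lemma card_RGSk_zero_zero : (RGSk 0 0).card = 1 := by
  have : RGSk 0 0 = RGS 0 := by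
    ext π
    rw [mem_RGSk_iff, mem_RGS_iff]
    simp
  rw [this, card_RGS_zero]

lemma RGSk_succ_zero (n : ℕ) : RGSk (n+1) 0 = ∅ := by
  ext π
  simp only [Finset.notMem_empty, iff_false, mem_RGSk_iff, not_and]
  intro h
  have h1 := (h 0).1
  have := Finset.le_sup (f := π) (Finset.mem_univ (0 : Fin (n+1)))
  omega

lemma RGSk_gt (n k : ℕ) (h : n < k) : RGSk n k = ∅ := by
  ext π
  simp only [Finset.notMem_empty, iff_false, mem_RGSk_iff, not_and]
  intro hr hs
  have := sup_le_of_isRGS hr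
  omega

lemma card_RGSk_succ (n k : ℕ) :
    (RGSk (n+1) (k+1)).card = (k+1) * (RGSk n (k+1)).card + (RGSk n k).card := by
  classical
  have hinj : Function.Injective
      (fun p : (Fin n → ℕ) × ℕ => (Fin.snoc p.1 p.2 : Fin (n+1) → ℕ)) := by
    rintro ⟨σ, v⟩ ⟨σ', v'⟩ h
    have h1 : σ = σ' := by
      have := congrArg (fun f => Fin.init f) h
      simpa [Fin.init_snoc] using this
    have h2 : v = v' := by
      have := congrArg (fun f => f (Fin.last n)) h
      simpa using this
    simp [h1, h2]
  set A := ((RGSk n (k+1)) ×ˢ Finset.Icc 1 (k+1)).image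
    (fun p : (Fin n → ℕ) × ℕ => (Fin.snoc p.1 p.2 : Fin (n+1) → ℕ)) with hA
  set B := (RGSk n k).image (fun σ => (Fin.snoc σ (k+1) : Fin (n+1) → ℕ)) with hB
  have hunion : RGSk (n+1) (k+1) = A ∪ B := by
    ext π
    rw [mem_RGSk_iff]
    constructor
    · rintro ⟨hr, hs⟩
      rw [← Fin.snoc_init_self π] at hr hs
      set σ := Fin.init π with hσdef
      set v := π (Fin.last n) with hvdef
      rw [isRGS_snoc] at hr
      rw [sup_snoc] at hs
      obtain ⟨hσ, hv1, hv2⟩ := hr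
      have hvle : v ≤ k + 1 := le_trans (le_max_right _ _) hs.le
      have hsle : Finset.univ.sup σ ≤ k + 1 := le_trans (le_max_left _ _) hs.le
      by_cases hc : Finset.univ.sup σ = k + 1
      · apply Finset.mem_union_left
        apply Finset.mem_image.mpr
        refine ⟨(σ, v), ?_, by rw [Fin.snoc_init_self]⟩
        exact Finset.mem_product.mpr ⟨mem_RGSk_iff.mpr ⟨hσ, hc⟩, Finset.mem_Icc.mpr ⟨hv1, hvle⟩⟩
      · apply Finset.mem_union_right
        have hvk : v = k + 1 := by
          rcases max_cases (Finset.univ.sup σ) v with ⟨h1, _⟩ | ⟨h1, _⟩ <;> omega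
        have hsk : Finset.univ.sup σ = k := by omega
        apply Finset.mem_image.mpr
        refine ⟨σ, mem_RGSk_iff.mpr ⟨hσ, hsk⟩, ?_⟩
        rw [← hvk, Fin.snoc_init_self]
    · intro hmem
      rcases Finset.mem_union.mp hmem with hmem | hmem
      · obtain ⟨⟨σ, v⟩, hp, rfl⟩ := Finset.mem_image.mp hmem
        obtain ⟨h1, h2⟩ := Finset.mem_product.mp hp
        obtain ⟨hσ, hsk⟩ := mem_RGSk_iff.mp h1
        obtain ⟨hv1, hv2⟩ := Finset.mem_Icc.mp h2
        refine ⟨isRGS_snoc.mpr ⟨hσ, hv1, by omega⟩, ?_⟩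
        rw [sup_snoc, hsk]
        omega
      · obtain ⟨σ, h1, rfl⟩ := Finset.mem_image.mp hmem
        obtain ⟨hσ, hsk⟩ := mem_RGSk_iff.mp h1
        refine ⟨isRGS_snoc.mpr ⟨hσ, by omega, by omega⟩, ?_⟩
        rw [sup_snoc, hsk]
        omega
  have hdisj : Disjoint A B := by
    rw [Finset.disjoint_left]
    rintro x hxA hxB
    obtain ⟨⟨σ, v⟩, hp, hx1⟩ := Finset.mem_image.mp hxA
    obtain ⟨σ', h1', hx2⟩ := Finset.mem_image.mp hxB
    have hσσ' : σ = σ' := by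
      have := congrArg (fun f => Fin.init f) (hx1.trans hx2.symm)
      simpa [Fin.init_snoc] using this
    have e1 := (mem_RGSk_iff.mp (Finset.mem_product.mp hp).1).2
    have e2 := (mem_RGSk_iff.mp h1').2
    rw [hσσ'] at e1
    exact absurd (e1.symm.trans e2) (by omega)
  rw [hunion, Finset.card_union_of_disjoint hdisj, hA, hB,
    Finset.card_image_of_injective _ hinj,
    Finset.card_image_of_injective _ (fun σ σ' h => by
      have := congrArg (fun f => Fin.init f) h
      simpa [Fin.init_snoc] using this),
    Finset.card_product, Nat.card_Icc]
  simp only [Nat.add_sub_cancel]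
  ring

lemma card_RGS_eq_sum (n : ℕ) :
    (RGS n).card = ∑ k ∈ Finset.range (n+1), (RGSk n k).card := by
  apply Finset.card_eq_sum_card_fiberwise
  intro π hπ
  exact Finset.mem_range.mpr (Nat.lt_succ_of_le (sup_le_of_isRGS (mem_RGS_iff.mp hπ)))

lemma mul_descFactorial (m k : ℕ) :
    m * m.descFactorial k = m.descFactorial (k+1) + k * m.descFactorial k := by
  rw [Nat.descFactorial_succ]
  rcases le_or_gt k m with h | h
  · have hm : (m - k) + k = m := by omega
    calc m * m.descFactorial k = ((m - k) + k) * m.descFactorial k := by rw [hm]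
    _ = (m-k) * m.descFactorial k + k * m.descFactorial k := by ring
  · rw [Nat.descFactorial_eq_zero_iff_lt.mpr h]
    simp

lemma pow_eq_sum_descFactorial (n m : ℕ) :
    m ^ n = ∑ k ∈ Finset.range (n+1), (RGSk n k).card * m.descFactorial k := by
  induction n with
  | zero => simp [card_RGSk_zero_zero]
  | succ n ih =>
    have key : ∑ k ∈ Finset.range (n+1), k * ((RGSk n k).card * m.descFactorial k)
        = ∑ k ∈ Finset.range (n+1),
            (k+1) * ((RGSk n (k+1)).card * m.descFactorial (k+1)) := by
      rw [Finset.sum_range_succ' (fun k => k * ((RGSk n k).card * m.descFactorial k)) n,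
        Finset.sum_range_succ]
      simp [RGSk_gt n (n+1) (by omega)]
    calc m ^ (n+1) = (∑ k ∈ Finset.range (n+1), (RGSk n k).card * m.descFactorial k) * m := by
          rw [← ih]; ring
    _ = ∑ k ∈ Finset.range (n+1),
          (RGSk n k).card * (m.descFactorial (k+1) + k * m.descFactorial k) := by
          rw [Finset.sum_mul]
          apply Finset.sum_congr rfl
          intro k _
          rw [mul_comm _ m, mul_left_comm, mul_descFactorial]
    _ = ∑ k ∈ Finset.range (n+1), (RGSk n k).card * m.descFactorial (k+1)
        + ∑ k ∈ Finset.range (n+1), k * ((RGSk n k).card * m.descFactorial k) := by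
          rw [← Finset.sum_add_distrib]
          apply Finset.sum_congr rfl
          intro k _
          ring
    _ = ∑ k ∈ Finset.range (n+1),
          ((k+1) * (RGSk n (k+1)).card + (RGSk n k).card) * m.descFactorial (k+1) := by
          rw [key, ← Finset.sum_add_distrib]
          apply Finset.sum_congr rfl
          intro k _
          ring
    _ = ∑ k ∈ Finset.range (n+2), (RGSk (n+1) k).card * m.descFactorial k := by
          rw [Finset.sum_range_succ' (fun k => (RGSk (n+1) k).card * m.descFactorial k) (n+1)]
          simp only [RGSk_succ_zero, Finset.card_empty, Nat.zero_mul, Nat.add_zero,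
            card_RGSk_succ]

lemma summable_one_div_factorial : Summable (fun m : ℕ => (1:ℝ) / m.factorial) := by
  simpa using Real.summable_pow_div_factorial 1

lemma tsum_one_div_factorial : ∑' m : ℕ, (1:ℝ) / m.factorial = Real.exp 1 := by
  rw [Real.exp_eq_exp_ℝ, NormedSpace.exp_eq_tsum_div]
  simp

lemma descFactorial_div_factorial_shift (k m : ℕ) :
    (((m + k).descFactorial k : ℝ)) / (m + k).factorial = 1 / m.factorial := by
  have hd : (((m + k).descFactorial k : ℕ) : ℝ) ≠ 0 := by
    rw [Nat.cast_ne_zero]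
    intro h
    rw [Nat.descFactorial_eq_zero_iff_lt] at h
    omega
  have hm : ((m.factorial : ℕ) : ℝ) ≠ 0 := by
    exact_mod_cast m.factorial_ne_zero
  have hnat : (m + k).factorial = m.factorial * (m + k).descFactorial k := by
    have := Nat.factorial_mul_descFactorial (Nat.le_add_left k m)
    simpa [Nat.add_sub_cancel] using this.symm
  have hf : ((m + k).factorial : ℝ) = (m.factorial : ℝ) * ((m + k).descFactorial k : ℝ) := by
    exact_mod_cast congrArg (fun x : ℕ => (x : ℝ)) hnat
  rw [hf]
  field_simp

lemma summable_descFactorial_div_factorial (k : ℕ) :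
    Summable (fun m : ℕ => ((m.descFactorial k : ℝ)) / m.factorial) := by
  rw [← summable_nat_add_iff k]
  simpa only [descFactorial_div_factorial_shift] using summable_one_div_factorial

lemma tsum_descFactorial_div_factorial (k : ℕ) :
    ∑' m : ℕ, ((m.descFactorial k : ℝ)) / m.factorial = Real.exp 1 := by
  have h := Summable.sum_add_tsum_nat_add (f := fun m : ℕ => ((m.descFactorial k : ℝ)) / m.factorial) k
    (summable_descFactorial_div_factorial k)
  have hz : ∑ i ∈ Finset.range k, ((i.descFactorial k : ℝ)) / i.factorial = 0 := by
    apply Finset.sum_eq_zero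
    intro i hi
    rw [Nat.descFactorial_eq_zero_iff_lt.mpr (Finset.mem_range.mp hi)]
    simp
  rw [hz, zero_add] at h
  rw [← h]
  simp only [descFactorial_div_factorial_shift]
  exact tsum_one_div_factorial

lemma pow_div_factorial_eq (n m : ℕ) :
    ((m : ℝ)) ^ n / m.factorial
      = ∑ k ∈ Finset.range (n+1),
          ((RGSk n k).card : ℝ) * ((m.descFactorial k : ℝ) / m.factorial) := by
  have h : ((m : ℝ)) ^ n
      = ∑ k ∈ Finset.range (n+1), ((RGSk n k).card : ℝ) * (m.descFactorial k : ℝ) := by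
    exact_mod_cast congrArg (fun x : ℕ => (x : ℝ)) (pow_eq_sum_descFactorial n m)
  rw [h, Finset.sum_div]
  exact Finset.sum_congr rfl fun k _ => by ring

lemma summable_pow_div_factorial' (n : ℕ) :
    Summable (fun m : ℕ => ((m : ℝ)) ^ n / m.factorial) := by
  have : (fun m : ℕ => ((m : ℝ)) ^ n / m.factorial)
      = fun m => ∑ k ∈ Finset.range (n+1),
          ((RGSk n k).card : ℝ) * ((m.descFactorial k : ℝ) / m.factorial) := by
    funext m; exact pow_div_factorial_eq n m
  rw [this]
  exact summable_sum fun k _ => (summable_descFactorial_div_factorial k).mul_left _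

lemma tsum_pow_div_factorial (n : ℕ) :
    ∑' m : ℕ, ((m : ℝ)) ^ n / m.factorial = Real.exp 1 * ((RGS n).card : ℝ) := by
  calc ∑' m : ℕ, ((m : ℝ)) ^ n / m.factorial
      = ∑' m : ℕ, ∑ k ∈ Finset.range (n+1),
          ((RGSk n k).card : ℝ) * ((m.descFactorial k : ℝ) / m.factorial) := by
        exact tsum_congr fun m => pow_div_factorial_eq n m
    _ = ∑ k ∈ Finset.range (n+1), ∑' m : ℕ,
          ((RGSk n k).card : ℝ) * ((m.descFactorial k : ℝ) / m.factorial) := by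
        exact Summable.tsum_finsetSum fun k _ => (summable_descFactorial_div_factorial k).mul_left _
    _ = ∑ k ∈ Finset.range (n+1), ((RGSk n k).card : ℝ) * Real.exp 1 := by
        apply Finset.sum_congr rfl
        intro k _
        rw [tsum_mul_left, tsum_descFactorial_div_factorial]
    _ = Real.exp 1 * ((RGS n).card : ℝ) := by
        rw [← Finset.sum_mul, mul_comm]
        congr 1
        exact_mod_cast (congrArg (fun x : ℕ => (x : ℝ)) (card_RGS_eq_sum n)).symm


/-- Extended Dobinski identity: for all `n, t ∈ ℕ`,
`Σ_{k≥0} (k+t)ⁿ/k! = e · Σ_{ℓ=0}^{n} C(n,ℓ) t^{n-ℓ} B_ℓ` (the series converges), and in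
particular (`t = 0`) Dobinski's formula `B_n = (1/e) Σ_{m≥0} mⁿ/m!`, where `B_ℓ = |R_ℓ|`. -/
theorem rgs_dobinski_extension (n t : ℕ) :
    Summable (fun k : ℕ => ((k + t : ℕ) : ℝ) ^ n / k.factorial) ∧
    (∑' k : ℕ, ((k + t : ℕ) : ℝ) ^ n / k.factorial)
      = Real.exp 1 * ∑ ℓ ∈ Finset.range (n + 1),
          (n.choose ℓ : ℝ) * (t : ℝ) ^ (n - ℓ) * ((RGS ℓ).card : ℝ) ∧
    ((RGS n).card : ℝ) = (1 / Real.exp 1) * ∑' m : ℕ, (m : ℝ) ^ n / m.factorial := by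
  have hfun : ∀ k : ℕ, ((k + t : ℕ) : ℝ) ^ n / k.factorial
      = ∑ ℓ ∈ Finset.range (n + 1),
          ((n.choose ℓ : ℝ) * (t : ℝ) ^ (n - ℓ)) * ((k : ℝ) ^ ℓ / k.factorial) := by
    intro k
    have : ((k + t : ℕ) : ℝ) = (k : ℝ) + (t : ℝ) := by push_cast; ring
    rw [this, add_pow, Finset.sum_div]
    exact Finset.sum_congr rfl fun ℓ _ => by ring
  have hsummand : ∀ ℓ ∈ Finset.range (n + 1),
      Summable (fun k : ℕ =>
        ((n.choose ℓ : ℝ) * (t : ℝ) ^ (n - ℓ)) * ((k : ℝ) ^ ℓ / k.factorial)) :=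
    fun ℓ _ => (summable_pow_div_factorial' ℓ).mul_left _
  have hsum : Summable (fun k : ℕ => ((k + t : ℕ) : ℝ) ^ n / k.factorial) := by
    have := summable_sum hsummand
    simpa only [← hfun] using this
  refine ⟨hsum, ?_, ?_⟩
  · calc ∑' k : ℕ, ((k + t : ℕ) : ℝ) ^ n / k.factorial
        = ∑' k : ℕ, ∑ ℓ ∈ Finset.range (n + 1),
            ((n.choose ℓ : ℝ) * (t : ℝ) ^ (n - ℓ)) * ((k : ℝ) ^ ℓ / k.factorial) :=
          tsum_congr hfun
      _ = ∑ ℓ ∈ Finset.range (n + 1), ∑' k : ℕ,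
            ((n.choose ℓ : ℝ) * (t : ℝ) ^ (n - ℓ)) * ((k : ℝ) ^ ℓ / k.factorial) :=
          Summable.tsum_finsetSum hsummand
      _ = ∑ ℓ ∈ Finset.range (n + 1),
            ((n.choose ℓ : ℝ) * (t : ℝ) ^ (n - ℓ)) * (Real.exp 1 * ((RGS ℓ).card : ℝ)) := by
          apply Finset.sum_congr rfl
          intro ℓ _
          rw [tsum_mul_left, tsum_pow_div_factorial]
      _ = Real.exp 1 * ∑ ℓ ∈ Finset.range (n + 1),
            (n.choose ℓ : ℝ) * (t : ℝ) ^ (n - ℓ) * ((RGS ℓ).card : ℝ) := by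
          rw [Finset.mul_sum]
          exact Finset.sum_congr rfl fun ℓ _ => by ring
  · rw [tsum_pow_div_factorial n, one_div, inv_mul_cancel_left₀ (Real.exp_ne_zero 1)]
end
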